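/- Let a < b be real numbers and let z be a real number with z > b. Then (1/π) · ∫_a^b √((b−x)(x−a))/(z−x) dx = z − (a+b)/2 − √((z−a)(z−b)). -/

import Mathlib

/-!
The affine substitution `x = (a + b)/2 + (b - a)/2 · t` turns the integral into
`(b - a)/2 · ∫_{-1}^{1} √(1 - t²)/(w - t) dt` with `w = (2z - a - b)/(b - a) > 1`, and
`√((z - a)(z - b)) = (b - a)/2 · √(w² - 1)`. The normalized integral equals `π (w - √(w² - 1))`
by the fundamental theorem of calculus, using the elementary primitive
`w · arcsin t - √(1 - t²) + √(w² - 1) · arcsin ((1 - w t)/(w - t))`.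
-/

open MeasureTheory intervalIntegral

open Real Set

lemma one_sub_sq_one_sub_mul_div_sub {w t : ℝ} (hwt : w - t ≠ 0) :
    1 - ((1 - w * t) / (w - t)) ^ 2 = (w ^ 2 - 1) * (1 - t ^ 2) / (w - t) ^ 2 := by
  field_simp
  ring

lemma hasDerivAt_mul_arcsin_sub_sqrt_one_sub_sq (w : ℝ) {t : ℝ} (ht : t ∈ Ioo (-1) 1) :
    HasDerivAt (fun t => w * arcsin t - √(1 - t ^ 2)) ((w + t) / √(1 - t ^ 2)) t := by
  have hpos : 0 < 1 - t ^ 2 := by nlinarith [ht.1, ht.2]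
  have hsqrt := ((hasDerivAt_pow 2 t).const_sub 1).sqrt hpos.ne'
  have harcsin := hasDerivAt_arcsin (by linarith [ht.1]) (by linarith [ht.2])
  refine ((harcsin.const_mul w).sub hsqrt).congr_deriv ?_
  have : 0 < √(1 - t ^ 2) := sqrt_pos.2 hpos
  field_simp
  ring

lemma hasDerivAt_arcsin_one_sub_mul_div_sub {w t : ℝ} (hw : 1 < w) (ht : t ∈ Ioo (-1) 1) :
    HasDerivAt (fun t => arcsin ((1 - w * t) / (w - t)))
      (-√(w ^ 2 - 1) / ((w - t) * √(1 - t ^ 2))) t := by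
  have hwt : 0 < w - t := by linarith [ht.2]
  have hw2 : 0 < w ^ 2 - 1 := by nlinarith
  have ht2 : 0 < 1 - t ^ 2 := by nlinarith [ht.1, ht.2]
  have hsq := one_sub_sq_one_sub_mul_div_sub hwt.ne'
  have hlt : |(1 - w * t) / (w - t)| < 1 := by
    rw [← sq_lt_one_iff_abs_lt_one]
    have : 0 < (w ^ 2 - 1) * (1 - t ^ 2) / (w - t) ^ 2 := by positivity
    linarith
  have hg : HasDerivAt (fun t => (1 - w * t) / (w - t)) ((1 - w ^ 2) / (w - t) ^ 2) t := by
    refine ((((hasDerivAt_id t).const_mul w).const_sub 1).div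
      ((hasDerivAt_id t).const_sub w) hwt.ne').congr_deriv ?_
    simp only [id_eq]; ring
  refine ((hasDerivAt_arcsin (abs_lt.1 hlt).1.ne' (abs_lt.1 hlt).2.ne).comp t hg).congr_deriv ?_
  rw [hsq, sqrt_div' _ (sq_nonneg _), sqrt_sq hwt.le, sqrt_mul hw2.le]
  have hr := sq_sqrt hw2.le
  have : 0 < √(w ^ 2 - 1) := sqrt_pos.2 hw2
  have : 0 < √(1 - t ^ 2) := sqrt_pos.2 ht2
  field_simp
  linear_combination hr

/-- For `w > 1` the Möbius map `t ↦ (1 - w t)/(w - t)` maps `[-1, 1]` onto itself, swapping the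
endpoints, so both arcsines stay in their domain up to the boundary. -/
noncomputable def semicirclePrimitive (w t : ℝ) : ℝ :=
  w * arcsin t - √(1 - t ^ 2) + √(w ^ 2 - 1) * arcsin ((1 - w * t) / (w - t))

lemma hasDerivAt_semicirclePrimitive {w t : ℝ} (hw : 1 < w) (ht : t ∈ Ioo (-1) 1) :
    HasDerivAt (semicirclePrimitive w) (√(1 - t ^ 2) / (w - t)) t := by
  have hwt : 0 < w - t := by linarith [ht.2]
  have ht2 : 0 < 1 - t ^ 2 := by nlinarith [ht.1, ht.2]
  refine ((hasDerivAt_mul_arcsin_sub_sqrt_one_sub_sq w ht).add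
    ((hasDerivAt_arcsin_one_sub_mul_div_sub hw ht).const_mul _)).congr_deriv ?_
  have hr := sq_sqrt (show 0 ≤ w ^ 2 - 1 by nlinarith)
  have hs := sq_sqrt ht2.le
  have : 0 < √(1 - t ^ 2) := sqrt_pos.2 ht2
  field_simp
  linear_combination -hs - hr

lemma continuousOn_semicirclePrimitive {w : ℝ} (hw : 1 < w) :
    ContinuousOn (semicirclePrimitive w) (Icc (-1) 1) := by
  have hwt : ∀ t ∈ Icc (-1 : ℝ) 1, w - t ≠ 0 := fun t ht => by linarith [ht.2]
  unfold semicirclePrimitive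
  fun_prop (disch := assumption)

lemma semicirclePrimitive_one {w : ℝ} (hw : w ≠ 1) :
    semicirclePrimitive w 1 = π / 2 * (w - √(w ^ 2 - 1)) := by
  have : (1 - w * 1) / (w - 1) = -1 := by
    rw [div_eq_iff (sub_ne_zero.2 hw)]; ring
  rw [semicirclePrimitive, this]
  simp
  ring

lemma semicirclePrimitive_neg_one {w : ℝ} (hw : w ≠ -1) :
    semicirclePrimitive w (-1) = -(π / 2 * (w - √(w ^ 2 - 1))) := by
  have : (1 - w * -1) / (w - -1) = 1 := by
    rw [div_eq_iff (by contrapose! hw; linarith)]; ring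
  rw [semicirclePrimitive, this]
  simp
  ring

theorem integral_sqrt_one_sub_sq_div_sub {w : ℝ} (hw : 1 < w) :
    ∫ t in (-1)..1, √(1 - t ^ 2) / (w - t) = π * (w - √(w ^ 2 - 1)) := by
  have hwt : ∀ t ∈ uIcc (-1 : ℝ) 1, w - t ≠ 0 := fun t ht => by
    rw [uIcc_of_le (by norm_num)] at ht; linarith [ht.2]
  rw [integral_eq_sub_of_hasDerivAt_of_le (by norm_num) (continuousOn_semicirclePrimitive hw)
    (fun t ht => hasDerivAt_semicirclePrimitive hw ht)
    (ContinuousOn.intervalIntegrable (by fun_prop (disch := assumption))),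
    semicirclePrimitive_one hw.ne', semicirclePrimitive_neg_one (by linarith)]
  ring

theorem integral_sqrt_mul_div_eq_integral_sqrt_one_sub_sq_div_sub (a b z : ℝ) (hab : a < b) :
    ∫ x in a..b, √((b - x) * (x - a)) / (z - x) =
      (b - a) / 2 * ∫ t in (-1)..1, √(1 - t ^ 2) / ((2 * z - a - b) / (b - a) - t) := by
  have hd : 0 < (b - a) / 2 := by linarith
  have hba : b - a ≠ 0 := by linarith
  have hintegrand : ∀ t : ℝ,
      √((b - ((b - a) / 2 * t + (a + b) / 2)) * ((b - a) / 2 * t + (a + b) / 2 - a)) /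
        (z - ((b - a) / 2 * t + (a + b) / 2)) =
      √(1 - t ^ 2) / ((2 * z - a - b) / (b - a) - t) := by
    intro t
    have h1 : (b - ((b - a) / 2 * t + (a + b) / 2)) * ((b - a) / 2 * t + (a + b) / 2 - a)
        = ((b - a) / 2) ^ 2 * (1 - t ^ 2) := by ring
    have h2 : z - ((b - a) / 2 * t + (a + b) / 2) =
        (b - a) / 2 * ((2 * z - a - b) / (b - a) - t) := by
      field_simp; ring
    rw [h1, h2, sqrt_mul (sq_nonneg _), sqrt_sq hd.le, mul_div_mul_left _ _ hd.ne']
  have := smul_integral_comp_mul_add (a := -1) (b := 1)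
    (fun x => √((b - x) * (x - a)) / (z - x)) ((b - a) / 2) ((a + b) / 2)
  rw [show (b - a) / 2 * -1 + (a + b) / 2 = a by ring,
    show (b - a) / 2 * 1 + (a + b) / 2 = b by ring] at this
  simpa only [hintegrand, smul_eq_mul] using this.symm

theorem integral_sqrt_mul_div (a b z : ℝ) (hab : a < b) (hz : b < z) :
    (1 / Real.pi) * (∫ x in a..b, Real.sqrt ((b - x) * (x - a)) / (z - x)) =
      z - (a + b) / 2 - Real.sqrt ((z - a) * (z - b)) := by
  set w := (2 * z - a - b) / (b - a) with hw_def
  have hba : 0 < b - a := by linarith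
  have hw : 1 < w := by rw [hw_def, one_lt_div hba]; linarith
  have hsqrt : √((z - a) * (z - b)) = (b - a) / 2 * √(w ^ 2 - 1) := by
    rw [← sqrt_sq (by positivity : 0 ≤ (b - a) / 2), ← sqrt_mul (sq_nonneg _), hw_def]
    congr 1
    field_simp
    ring
  rw [integral_sqrt_mul_div_eq_integral_sqrt_one_sub_sq_div_sub a b z hab,
    integral_sqrt_one_sub_sq_div_sub hw, hsqrt, hw_def]
  field_simp
  ring
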